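/- Suppose 0 < ε ≤ 1/9 and 0 < θ ≤ 1/9, and set θ* := θ/(1−ε). For a positive integer n, write (ℙ^{(ε,θ)})^n = (p^{(ε,θ)(n)}_{i,j}). Then for every positive integer n and every ordered pair (i,j) ∈ {−1,0,1}², one has |p^{(ε,θ)(n)}_{i,j} − π^{(ε)}_j| ≤ 2(1−θ)^n. -/
import Mathlib


open MeasureTheory ProbabilityTheory Filter Topology

noncomputable section

/-- The index set `{−1, 0, 1} ⊆ ℤ` for the 3×3 matrices. -/
def S3 : Finset ℤ := {-1, 0, 1}

/-- The one-step transition probability matrix `ℙ^{(ε,θ)}`, indexed by `{−1,0,1}`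
(with `θ* := θ/(1−ε)`): `p_{0,0} = 1 − θ*ε`; `p_{0,−1} = p_{0,1} = θ*ε/2`;
`p_{−1,−1} = p_{1,1} = 1 − θ`; `p_{−1,0} = p_{1,0} = θ`; `p_{−1,1} = p_{1,−1} = 0`. -/
def Pmat (ε θ : ℝ) : Matrix S3 S3 ℝ :=
  Matrix.of fun i j =>
    if (i : ℤ) = 0 ∧ (j : ℤ) = 0 then 1 - (θ / (1 - ε)) * ε
    else if (i : ℤ) = 0 then (θ / (1 - ε)) * ε / 2
    else if (j : ℤ) = 0 then θ
    else if (i : ℤ) = (j : ℤ) then 1 - θ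
    else 0

/-- The invariant probability vector `π^{(ε)}`: `π_0 = 1 − ε`, `π_{−1} = π_1 = ε/2`. -/
def piVec (ε : ℝ) : S3 → ℝ := fun j => if (j : ℤ) = 0 then 1 - ε else ε / 2

/-- The matrix `A^{(ε)}`, each of whose rows equals `π^{(ε)}`. -/
def Amat (ε : ℝ) : Matrix S3 S3 ℝ :=
  Matrix.of fun _ j => piVec ε j

/-- The matrix `C`: `c_{−1,−1} = c_{1,1} = 1/2`, `c_{−1,1} = c_{1,−1} = −1/2`, and
`c_{i,j} = 0` whenever `i = 0` or `j = 0`. -/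
def Cmat : Matrix S3 S3 ℝ :=
  Matrix.of fun i j =>
    if (i : ℤ) = 0 ∨ (j : ℤ) = 0 then 0
    else if (i : ℤ) = (j : ℤ) then 1 / 2
    else -(1 / 2)


/-- Auxiliary matrix `B^{(ε)}` in the spectral decomposition of `ℙ^{(ε,θ)}`. -/
def Bmat (ε : ℝ) : Matrix S3 S3 ℝ :=
  Matrix.of fun i j =>
    if (i : ℤ) = 0 ∧ (j : ℤ) = 0 then ε
    else if (i : ℤ) = 0 then -(ε / 2)
    else if (j : ℤ) = 0 then -(1 - ε)
    else (1 - ε) / 2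

def em1 : S3 := ⟨-1, by decide⟩
def e0 : S3 := ⟨0, by decide⟩
def e1 : S3 := ⟨1, by decide⟩

lemma univ_S3 : (Finset.univ : Finset S3) = {em1, e0, e1} := by decide

lemma sum_S3 (f : S3 → ℝ) : (∑ x : S3, f x) = f em1 + f e0 + f e1 := by
  rw [univ_S3, Finset.sum_insert (by decide), Finset.sum_insert (by decide),
    Finset.sum_singleton]; ring

lemma base (ε θ : ℝ) (hε : ε ≠ 1) :
    Pmat ε θ = Amat ε + (1 - θ / (1 - ε)) • Bmat ε + (1 - θ) • Cmat := by
  have h1 : (1:ℝ) - ε ≠ 0 := sub_ne_zero.2 (Ne.symm hε)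
  ext i j
  fin_cases i <;> fin_cases j <;>
    simp [Pmat, Amat, Bmat, Cmat, piVec, Matrix.add_apply, Matrix.smul_apply] <;>
    field_simp <;> ring

lemma AP (ε θ : ℝ) (hε : ε ≠ 1) : Amat ε * Pmat ε θ = Amat ε := by
  have h1 : (1:ℝ) - ε ≠ 0 := sub_ne_zero.2 (Ne.symm hε)
  ext i j
  rw [Matrix.mul_apply, sum_S3]
  fin_cases i <;> fin_cases j <;>
    simp [Pmat, Amat, piVec, em1, e0, e1] <;> field_simp <;> ring

lemma BP (ε θ : ℝ) (hε : ε ≠ 1) :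
    Bmat ε * Pmat ε θ = (1 - θ / (1 - ε)) • Bmat ε := by
  have h1 : (1:ℝ) - ε ≠ 0 := sub_ne_zero.2 (Ne.symm hε)
  ext i j
  rw [Matrix.mul_apply, sum_S3]
  fin_cases i <;> fin_cases j <;>
    simp [Pmat, Bmat, em1, e0, e1, Matrix.smul_apply] <;> field_simp <;> ring

lemma CP (ε θ : ℝ) : Cmat * Pmat ε θ = (1 - θ) • Cmat := by
  ext i j
  rw [Matrix.mul_apply, sum_S3]
  fin_cases i <;> fin_cases j <;>
    simp [Pmat, Cmat, em1, e0, e1, Matrix.smul_apply] <;> ring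

lemma decomp (ε θ : ℝ) (hε : ε ≠ 1) (n : ℕ) (hn : 0 < n) :
    (Pmat ε θ) ^ n = Amat ε + ((1 - θ / (1 - ε)) ^ n) • Bmat ε + ((1 - θ) ^ n) • Cmat := by
  induction n with
  | zero => omega
  | succ m ih =>
    rcases Nat.eq_zero_or_pos m with hm | hm
    · subst hm; simpa using base ε θ hε
    · rw [pow_succ, ih hm, add_mul, add_mul, AP ε θ hε, Matrix.smul_mul, Matrix.smul_mul,
        BP ε θ hε, CP ε θ, smul_smul, smul_smul, pow_succ, pow_succ]

/-- Bound (5.17) of the paper: for `0 < ε ≤ 1/9`, `0 < θ ≤ 1/9`, every `n ≥ 1` and all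
`i, j ∈ {−1,0,1}`, `|p^{(ε,θ)(n)}_{i,j} − π^{(ε)}_j| ≤ 2(1−θ)^n`. -/
theorem stmt5 (ε θ : ℝ) (hε : 0 < ε ∧ ε ≤ 1 / 9) (hθ : 0 < θ ∧ θ ≤ 1 / 9)
    (n : ℕ) (hn : 0 < n) (i j : S3) :
    |((Pmat ε θ) ^ n) i j - piVec ε j| ≤ 2 * (1 - θ) ^ n := by
  obtain ⟨hε0, hε9⟩ := hε
  obtain ⟨hθ0, hθ9⟩ := hθ
  have hεne : ε ≠ 1 := by linarith
  have h1ε : (0:ℝ) < 1 - ε := by linarith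
  have hlam0 : (0:ℝ) ≤ 1 - θ / (1 - ε) := by
    have h8 : (8:ℝ)/9 ≤ 1 - ε := by linarith
    have : θ / (1 - ε) ≤ (1/9) / (8/9) :=
      div_le_div₀ (by norm_num) hθ9 (by norm_num) h8
    linarith [this]
  have hlamle : 1 - θ / (1 - ε) ≤ 1 - θ := by
    have : θ ≤ θ / (1 - ε) := by
      rw [le_div_iff₀ h1ε]; nlinarith
    linarith
  have hμ0 : (0:ℝ) ≤ 1 - θ := by linarith
  have hkey := decomp ε θ hεne n hn
  have hij : ((Pmat ε θ) ^ n) i j - piVec ε j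
      = ((1 - θ / (1 - ε)) ^ n) * Bmat ε i j + ((1 - θ) ^ n) * Cmat i j := by
    rw [hkey]; simp [Matrix.add_apply, Matrix.smul_apply, Amat, smul_eq_mul]; ring
  rw [hij]
  have hB : |Bmat ε i j| ≤ 1 := by
    fin_cases i <;> fin_cases j <;> simp [Bmat] <;> rw [abs_le] <;> constructor <;> linarith
  have hC : |Cmat i j| ≤ 1/2 := by
    fin_cases i <;> fin_cases j <;> simp [Cmat] <;> rw [abs_le] <;> constructor <;> linarith
  have hlampow : (1 - θ / (1 - ε)) ^ n ≤ (1 - θ) ^ n := pow_le_pow_left₀ hlam0 hlamle n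
  have hμpow : (0:ℝ) ≤ (1 - θ) ^ n := pow_nonneg hμ0 n
  have hlp : (0:ℝ) ≤ (1 - θ / (1 - ε)) ^ n := pow_nonneg hlam0 n
  calc |((1 - θ / (1 - ε)) ^ n) * Bmat ε i j + ((1 - θ) ^ n) * Cmat i j|
      ≤ |((1 - θ / (1 - ε)) ^ n) * Bmat ε i j| + |((1 - θ) ^ n) * Cmat i j| := abs_add_le _ _
    _ = ((1 - θ / (1 - ε)) ^ n) * |Bmat ε i j| + ((1 - θ) ^ n) * |Cmat i j| := by
        rw [abs_mul, abs_mul, abs_of_nonneg hlp, abs_of_nonneg hμpow]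
    _ ≤ ((1 - θ) ^ n) * 1 + ((1 - θ) ^ n) * (1/2) := by
        gcongr
    _ ≤ 2 * (1 - θ) ^ n := by linarith
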